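/- arXiv:1601.01236 — 2 statements merged into one kernel-verified Lean document; each statement's English description precedes it below -/
import Mathlib

section
/- Let Q be a function from density matrices on ℂ^m ⊗ ℂ^n to ℝ that is nonnegative and satisfies Q(σ) > 0 for every density matrix σ that is not classically correlated. If ρ is a density matrix on ℂ^m ⊗ ℂ^n that is not a product state, then there exists d ≥ 1 such that PQ_d(ρ) > 0. -/
open Matrix
open scoped Kronecker ComplexOrder

/-- A density matrix: positive semidefinite with unit trace. -/
def IsDensity {N : Type*} [Fintype N] (ρ : Matrix N N ℂ) : Prop :=
  ρ.PosSemidef ∧ ρ.trace = 1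

/-- The rank-one projector `|v⟩⟨v|`. -/
def proj {N : Type*} (v : N → ℂ) : Matrix N N ℂ :=
  Matrix.vecMulVec v (star v)

/-- `e` is an orthonormal basis of `ℂ^N` (as an indexed family of vectors). -/
def Onb {N : Type*} [Fintype N] [DecidableEq N] (e : N → N → ℂ) : Prop :=
  ∀ i j, (∑ k, star (e i k) * e j k) = if i = j then (1 : ℂ) else 0

def IsUnitary {N : Type*} [Fintype N] [DecidableEq N] (U : Matrix N N ℂ) : Prop :=
  Uᴴ * U = 1 ∧ U * Uᴴ = 1

/-- A product state with respect to the bipartition `α | β`. -/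
def IsProduct {α β : Type*} [Fintype α] [Fintype β]
    (ρ : Matrix (α × β) (α × β) ℂ) : Prop :=
  ∃ (ρA : Matrix α α ℂ) (ρB : Matrix β β ℂ),
    IsDensity ρA ∧ IsDensity ρB ∧ ρ = ρA ⊗ₖ ρB

/-- Classically correlated with respect to the bipartition `α | β`. -/
def IsCC {α β : Type*} [Fintype α] [DecidableEq α] [Fintype β] [DecidableEq β]
    (ρ : Matrix (α × β) (α × β) ℂ) : Prop :=
  ∃ (e : α → α → ℂ) (f : β → β → ℂ) (p : α → β → ℝ),
    Onb e ∧ Onb f ∧ (∀ i j, 0 ≤ p i j) ∧ (∑ i, ∑ j, p i j) = 1 ∧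
    ρ = ∑ i, ∑ j, ((p i j : ℂ)) • (proj (e i) ⊗ₖ proj (f j))

/-- Partial trace over the second tensor factor. -/
noncomputable def ptrace2 {a b : Type*} [Fintype b] (X : Matrix (a × b) (a × b) ℂ) : Matrix a a ℂ :=
  Matrix.of fun i j => ∑ k, X (i, k) (j, k)

/-- Partial trace over the first tensor factor. -/
noncomputable def ptrace1 {a b : Type*} [Fintype a] (X : Matrix (a × b) (a × b) ℂ) : Matrix b b ℂ :=
  Matrix.of fun i j => ∑ k, X (k, i) (k, j)

/-- Apply a Kraus family to a matrix: `σ ↦ Σ_k K_k σ K_k†`. -/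
noncomputable def kraus {N : Type*} [Fintype N] {d : ℕ} (K : Fin d → Matrix N N ℂ)
    (σ : Matrix N N ℂ) : Matrix N N ℂ :=
  ∑ k, K k * σ * (K k)ᴴ

/-- A quantum channel of Kraus rank at most `d`. -/
def IsChannel {N : Type*} [Fintype N] [DecidableEq N] (d : ℕ)
    (Φ : Matrix N N ℂ → Matrix N N ℂ) : Prop :=
  ∃ K : Fin d → Matrix N N ℂ,
    (∑ k, (K k)ᴴ * K k) = 1 ∧ ∀ σ, Φ σ = kraus K σ

/-- The local operation `Φ_A ⊗ Φ_B` determined by two Kraus families. -/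
noncomputable def localKraus {α β : Type*} [Fintype α] [Fintype β] {dA dB : ℕ}
    (KA : Fin dA → Matrix α α ℂ) (KB : Fin dB → Matrix β β ℂ)
    (σ : Matrix (α × β) (α × β) ℂ) : Matrix (α × β) (α × β) ℂ :=
  ∑ k, ∑ l, (KA k ⊗ₖ KB l) * σ * (KA k ⊗ₖ KB l)ᴴ

/-- A local operation of rank at most `d`: `Φ_A ⊗ Φ_B` with both local channels of
Kraus rank at most `d`. -/
def IsLocalOp {α β : Type*} [Fintype α] [DecidableEq α] [Fintype β] [DecidableEq β] (d : ℕ)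
    (Φ : Matrix (α × β) (α × β) ℂ → Matrix (α × β) (α × β) ℂ) : Prop :=
  ∃ (KA : Fin d → Matrix α α ℂ) (KB : Fin d → Matrix β β ℂ),
    (∑ k, (KA k)ᴴ * KA k) = 1 ∧ (∑ l, (KB l)ᴴ * KB l) = 1 ∧
    ∀ σ, Φ σ = localKraus KA KB σ

/-- The potential quantumness of rank `d` associated with the quantumness measure `Q`. -/
noncomputable def PQ {α β : Type*} [Fintype α] [DecidableEq α] [Fintype β] [DecidableEq β]
    (d : ℕ) (Q : Matrix (α × β) (α × β) ℂ → ℝ)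
    (ρ : Matrix (α × β) (α × β) ℂ) : EReal :=
  sSup {x : EReal | ∃ Φ, IsLocalOp d Φ ∧ x = (Q (Φ ρ) : EReal)}

/-!
If `ρ` is not classically correlated, the identity operation (rank `1`) already gives
`Q ρ > 0`. Otherwise `ρ = ∑ p i j • |e i⟩⟨e i| ⊗ |f j⟩⟨f j|`, and since `ρ` is not a product state
the distribution `p` is not the product of its marginals: `p i₀ j₀ ≠ p_A i₀ * p_B j₀` for some
`i₀, j₀` (which forces both factors to have dimension at least `2`). Choose unit vectors with
`[P_x, P_y] ≠ 0` and `[P_w, P_z] ≠ 0` and apply the local channels sending `e i₀ ↦ x`,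
`e i ↦ y` (`i ≠ i₀`) and `f j₀ ↦ w`, `f j ↦ z` (`j ≠ j₀`). A classically correlated state `σ`
commutes with `σ_A ⊗ 1`, where `σ_A` is its partial trace over the second factor, but for
the output state `[σ, σ_A ⊗ 1] = (p i₀ j₀ - p_A i₀ * p_B j₀) • [P_x, P_y] ⊗ (P_w - P_z) ≠ 0`.
-/

open Finset

section RankOne

variable {N : Type*} [Fintype N]

lemma proj_mul_proj (u v : N → ℂ) :
    proj u * proj v = (star u ⬝ᵥ v) • vecMulVec u (star v) := by
  rw [proj, proj, vecMulVec_mul_vecMulVec, vecMulVec_smul]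

lemma isDensity_proj {v : N → ℂ} (hv : star v ⬝ᵥ v = 1) : IsDensity (proj v) :=
  ⟨posSemidef_vecMulVec_self_star v, by rw [proj, trace_vecMulVec, dotProduct_comm, hv]⟩

variable [DecidableEq N] {e : N → N → ℂ}

lemma Onb.star_dotProduct (he : Onb e) (i j : N) :
    star (e i) ⬝ᵥ e j = if i = j then 1 else 0 :=
  he i j

lemma Onb.star_dotProduct_self (he : Onb e) (i : N) : star (e i) ⬝ᵥ e i = 1 := by
  simpa using he.star_dotProduct i i

lemma Onb.sum_proj (he : Onb e) : ∑ i, proj (e i) = 1 := by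
  let M : Matrix N N ℂ := of fun i k => star (e i k)
  have hM : M * Mᴴ = 1 := by
    ext i j
    simpa [M, mul_apply, one_apply] using he i j
  ext k l
  have := congr_fun₂ (mul_eq_one_comm.mp hM : Mᴴ * M = 1) k l
  simpa [M, mul_apply, proj, vecMulVec_apply, Matrix.sum_apply, mul_comm] using this

lemma Onb.proj_mul_proj (he : Onb e) (i j : N) :
    proj (e i) * proj (e j) = if i = j then proj (e i) else 0 := by
  rw [_root_.proj_mul_proj, he.star_dotProduct]
  split_ifs with h
  · rw [one_smul, h, proj]
  · rw [zero_smul]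

lemma Onb.commute_proj (he : Onb e) (i j : N) : Commute (proj (e i)) (proj (e j)) := by
  by_cases h : i = j
  · rw [h]
  · rw [Commute, SemiconjBy, he.proj_mul_proj, he.proj_mul_proj, if_neg h, if_neg (Ne.symm h)]

lemma exists_proj_mul_sub_ne_zero [Nontrivial N] :
    ∃ x y : N → ℂ, star x ⬝ᵥ x = 1 ∧ star y ⬝ᵥ y = 1 ∧ proj x * proj y - proj y * proj x ≠ 0 := by
  obtain ⟨c₀, c₁, hc⟩ := exists_pair_ne N
  -- `(3/5, 4/5)` on `c₀, c₁` is a unit vector neither parallel nor orthogonal to `e_{c₀}`.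
  refine ⟨Pi.single c₀ 1, Pi.single c₀ (3 / 5) + Pi.single c₁ (4 / 5), by simp, ?_, fun h => ?_⟩
  · simp [dotProduct_add, hc, hc.symm]
    norm_num
  · have := congr_fun₂ h c₀ c₁
    simp [proj_mul_proj, vecMulVec_apply, hc, hc.symm] at this

end RankOne

section Kronecker

variable {α β ι : Type*}

lemma sum_kronecker (s : Finset ι) (A : ι → Matrix α α ℂ) (B : Matrix β β ℂ) :
    (∑ i ∈ s, A i) ⊗ₖ B = ∑ i ∈ s, A i ⊗ₖ B := by
  ext
  simp [kroneckerMap_apply, Matrix.sum_apply, Finset.sum_mul]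

lemma kronecker_sum (s : Finset ι) (A : Matrix α α ℂ) (B : ι → Matrix β β ℂ) :
    A ⊗ₖ (∑ i ∈ s, B i) = ∑ i ∈ s, A ⊗ₖ B i := by
  ext
  simp [kroneckerMap_apply, Matrix.sum_apply, Finset.mul_sum]

lemma sub_kronecker (A A' : Matrix α α ℂ) (B : Matrix β β ℂ) :
    (A - A') ⊗ₖ B = A ⊗ₖ B - A' ⊗ₖ B := by
  ext
  simp [kroneckerMap_apply, sub_mul]

lemma kronecker_ne_zero {A : Matrix α α ℂ} {B : Matrix β β ℂ} (hA : A ≠ 0) (hB : B ≠ 0) :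
    A ⊗ₖ B ≠ 0 := by
  obtain ⟨i, j, hij⟩ : ∃ i j, A i j ≠ 0 := by simpa [← Matrix.ext_iff] using hA
  obtain ⟨k, l, hkl⟩ : ∃ k l, B k l ≠ 0 := by simpa [← Matrix.ext_iff] using hB
  intro h
  simpa [hij, hkl] using congr_fun₂ h (i, k) (j, l)

variable [Fintype β]

lemma ptrace2_kronecker (A : Matrix α α ℂ) (B : Matrix β β ℂ) :
    ptrace2 (A ⊗ₖ B) = B.trace • A := by
  ext
  simp [ptrace2, kroneckerMap_apply, Matrix.trace, Finset.mul_sum, mul_comm]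

lemma ptrace2_smul (c : ℂ) (σ : Matrix (α × β) (α × β) ℂ) :
    ptrace2 (c • σ) = c • ptrace2 σ := by
  ext
  simp [ptrace2, Finset.mul_sum]

lemma ptrace2_sum (s : Finset ι) (σ : ι → Matrix (α × β) (α × β) ℂ) :
    ptrace2 (∑ i ∈ s, σ i) = ∑ i ∈ s, ptrace2 (σ i) := by
  ext
  simp only [ptrace2, of_apply, Matrix.sum_apply]
  exact Finset.sum_comm

end Kronecker

section Kraus

variable {α β : Type*} [Fintype α] [Fintype β]

lemma localKraus_kronecker {dA dB : ℕ} (KA : Fin dA → Matrix α α ℂ)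
    (KB : Fin dB → Matrix β β ℂ) (A : Matrix α α ℂ) (B : Matrix β β ℂ) :
    localKraus KA KB (A ⊗ₖ B) = kraus KA A ⊗ₖ kraus KB B := by
  simp only [localKraus, kraus, sum_kronecker, kronecker_sum, conjTranspose_kronecker,
    mul_kronecker_mul]
  exact Finset.sum_comm

lemma localKraus_smul {dA dB : ℕ} (KA : Fin dA → Matrix α α ℂ) (KB : Fin dB → Matrix β β ℂ)
    (c : ℂ) (σ : Matrix (α × β) (α × β) ℂ) :
    localKraus KA KB (c • σ) = c • localKraus KA KB σ := by
  simp only [localKraus, Finset.smul_sum, Matrix.mul_smul, Matrix.smul_mul]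

lemma localKraus_sum {ι : Type*} {dA dB : ℕ} (KA : Fin dA → Matrix α α ℂ)
    (KB : Fin dB → Matrix β β ℂ) (s : Finset ι) (σ : ι → Matrix (α × β) (α × β) ℂ) :
    localKraus KA KB (∑ i ∈ s, σ i) = ∑ i ∈ s, localKraus KA KB (σ i) := by
  simp only [localKraus, Matrix.mul_sum, Matrix.sum_mul]
  rw [Finset.sum_comm (s := s)]
  exact Finset.sum_congr rfl fun _ _ => Finset.sum_comm

end Kraus

lemma exists_fin_sum_comp_eq {ι M A : Type*} [Fintype ι] [Zero M] [AddCommMonoid A]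
    (K : ι → M) {d : ℕ} (hd : Fintype.card ι ≤ d) :
    ∃ K' : Fin d → M, ∀ g : M → A, g 0 = 0 → ∑ k, g (K' k) = ∑ i, g (K i) := by
  classical
  obtain ⟨f⟩ := Function.Embedding.nonempty_of_card_le (hd.trans_eq (Fintype.card_fin d).symm)
  refine ⟨Function.extend f K 0, fun g hg => ?_⟩
  rw [← Finset.sum_subset (Finset.subset_univ (univ.map f)), Finset.sum_map]
  · simp [f.injective.extend_apply]
  · intro k _ hk
    rw [Function.extend_apply' _ _ _ (by simpa using hk), Pi.zero_apply, hg]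

section Transfer

variable {N : Type*} [Fintype N]

lemma exists_fin_kraus {ι : Type*} [Fintype ι] (K : ι → Matrix N N ℂ) {d : ℕ}
    (hd : Fintype.card ι ≤ d) :
    ∃ K' : Fin d → Matrix N N ℂ, ∑ k, (K' k)ᴴ * K' k = ∑ i, (K i)ᴴ * K i ∧
      ∀ σ, kraus K' σ = ∑ i, K i * σ * (K i)ᴴ := by
  obtain ⟨K', hK'⟩ := exists_fin_sum_comp_eq (A := Matrix N N ℂ) K hd
  exact ⟨K', hK' (fun K => Kᴴ * K) (by simp), fun σ => hK' (fun K => K * σ * Kᴴ) (by simp)⟩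

variable [DecidableEq N] {e u : N → N → ℂ}

lemma sum_conjTranspose_mul_transfer (he : Onb e) (hu : ∀ i, star (u i) ⬝ᵥ u i = 1) :
    ∑ i, (vecMulVec (u i) (star (e i)))ᴴ * vecMulVec (u i) (star (e i)) = 1 := by
  simp_rw [conjTranspose_vecMulVec, star_star, vecMulVec_mul_vecMulVec, hu, one_smul]
  exact he.sum_proj

lemma sum_transfer_mul_proj_mul (he : Onb e) (j : N) :
    ∑ i, vecMulVec (u i) (star (e i)) * proj (e j) * (vecMulVec (u i) (star (e i)))ᴴ
      = proj (u j) := by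
  have hterm : ∀ i, vecMulVec (u i) (star (e i)) * proj (e j) *
      (vecMulVec (u i) (star (e i)))ᴴ = if i = j then proj (u j) else 0 := by
    intro i
    rw [conjTranspose_vecMulVec, star_star, proj, vecMulVec_mul_vecMulVec, vecMulVec_smul,
      smul_mul, vecMulVec_mul_vecMulVec, vecMulVec_smul, he.star_dotProduct,
      he.star_dotProduct]
    by_cases h : i = j
    · rw [if_pos h, if_pos h.symm, if_pos h, one_smul, one_smul, h, proj]
    · simp [h]
  rw [Finset.sum_congr rfl fun i _ => hterm i, Finset.sum_ite_eq']
  simp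

end Transfer

section Density

variable {N : Type*} [Fintype N]

lemma isDensity_sum_smul {ι : Type*} [Fintype ι] {c : ι → ℝ} (hc0 : ∀ i, 0 ≤ c i)
    (hc1 : ∑ i, c i = 1) {A : ι → Matrix N N ℂ} (hA : ∀ i, IsDensity (A i)) :
    IsDensity (∑ i, (c i : ℂ) • A i) := by
  refine ⟨posSemidef_sum _ fun i _ => (hA i).1.smul (Complex.zero_le_real.mpr (hc0 i)), ?_⟩
  simp [trace_sum, (hA _).2, ← Complex.ofReal_sum, hc1]

lemma IsDensity.kronecker {M : Type*} [Fintype M] {A : Matrix N N ℂ} {B : Matrix M M ℂ}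
    (hA : IsDensity A) (hB : IsDensity B) : IsDensity (A ⊗ₖ B) :=
  ⟨hA.1.kronecker hB.1, by rw [trace_kronecker, hA.2, hB.2, one_mul]⟩

end Density

section KronMixture

variable {ι κ α β : Type*} [Fintype ι] [Fintype κ]

noncomputable def kronMixture (p : ι → κ → ℝ) (A : ι → Matrix α α ℂ) (B : κ → Matrix β β ℂ) :
    Matrix (α × β) (α × β) ℂ :=
  ∑ i, ∑ j, (p i j : ℂ) • (A i ⊗ₖ B j)

variable {p : ι → κ → ℝ} {A : ι → Matrix α α ℂ} {B : κ → Matrix β β ℂ}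

lemma isDensity_kronMixture [Fintype α] [Fintype β] (hp0 : ∀ i j, 0 ≤ p i j)
    (hp1 : ∑ i, ∑ j, p i j = 1) (hA : ∀ i, IsDensity (A i)) (hB : ∀ j, IsDensity (B j)) :
    IsDensity (kronMixture p A B) := by
  have hp1' : ∑ q : ι × κ, p q.1 q.2 = 1 := by rwa [Fintype.sum_prod_type]
  have := isDensity_sum_smul (fun q : ι × κ => hp0 q.1 q.2) hp1'
    fun q => (hA q.1).kronecker (hB q.2)
  rwa [Fintype.sum_prod_type] at this

lemma kronMixture_of_eq_mul {a : ι → ℝ} {b : κ → ℝ} (hp : ∀ i j, p i j = a i * b j) :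
    kronMixture p A B = (∑ i, (a i : ℂ) • A i) ⊗ₖ ∑ j, (b j : ℂ) • B j := by
  simp only [kronMixture, sum_kronecker, kronecker_sum, smul_kronecker, kronecker_smul,
    Finset.smul_sum, smul_smul, hp, Complex.ofReal_mul, mul_comm]
  exact Finset.sum_comm

lemma isProduct_kronMixture [Fintype α] [Fintype β] (hp0 : ∀ i j, 0 ≤ p i j)
    (hp1 : ∑ i, ∑ j, p i j = 1) (hA : ∀ i, IsDensity (A i)) (hB : ∀ j, IsDensity (B j))
    (hp : ∀ i j, p i j = (∑ j', p i j') * ∑ i', p i' j) : IsProduct (kronMixture p A B) :=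
  ⟨_, _, isDensity_sum_smul (fun i => sum_nonneg fun j _ => hp0 i j) hp1 hA,
    isDensity_sum_smul (fun j => sum_nonneg fun i _ => hp0 i j) (by rwa [Finset.sum_comm]) hB,
    kronMixture_of_eq_mul hp⟩

lemma ptrace2_kronMixture [Fintype β] (hB : ∀ j, (B j).trace = 1) :
    ptrace2 (kronMixture p A B) = ∑ i, ((∑ j, p i j : ℝ) : ℂ) • A i := by
  simp only [kronMixture, ptrace2_sum, ptrace2_smul, ptrace2_kronecker, hB, one_smul,
    Complex.ofReal_sum, Finset.sum_smul]

lemma kronMixture_commutator [Fintype α] [Fintype β] [DecidableEq β] (S : Matrix α α ℂ) :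
    kronMixture p A B * (S ⊗ₖ 1) - (S ⊗ₖ 1) * kronMixture p A B
      = kronMixture p (fun i => A i * S - S * A i) B := by
  simp only [kronMixture, Finset.sum_mul, Finset.mul_sum, smul_mul_assoc, mul_smul_comm,
    ← mul_kronecker_mul, mul_one, one_mul, sub_kronecker, smul_sub, Finset.sum_sub_distrib]

lemma kronMixture_smul_left (r : ι → ℂ) (C : Matrix α α ℂ) :
    kronMixture p (fun i => r i • C) B = C ⊗ₖ ∑ j, (∑ i, (p i j : ℂ) * r i) • B j := by
  simp only [kronMixture, kronecker_sum, kronecker_smul, smul_kronecker, smul_smul,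
    Finset.sum_smul]
  exact Finset.sum_comm

lemma localKraus_kronMixture [Fintype α] [Fintype β] {dA dB : ℕ}
    (KA : Fin dA → Matrix α α ℂ) (KB : Fin dB → Matrix β β ℂ) :
    localKraus KA KB (kronMixture p A B)
      = kronMixture p (fun i => kraus KA (A i)) (fun j => kraus KB (B j)) := by
  simp only [kronMixture, localKraus_sum, localKraus_smul, localKraus_kronecker]

end KronMixture

lemma sum_smul_ite_eq {ι R M : Type*} [Fintype ι] [DecidableEq ι] [Ring R] [AddCommGroup M]
    [Module R M] (c : ι → R) (i₀ : ι) (X Y : M) :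
    ∑ i, c i • (if i = i₀ then X else Y) = c i₀ • X + (∑ i, c i - c i₀) • Y := by
  rw [← add_sum_erase _ _ (mem_univ i₀), if_pos rfl,
    sum_congr rfl fun i hi => by rw [if_neg (ne_of_mem_erase hi)], ← sum_smul,
    sum_erase_eq_sub (mem_univ i₀)]

section Marginals

variable {ι κ : Type*} [Fintype ι] [Fintype κ] {p : ι → κ → ℝ}

lemma eq_mul_marginal_of_subsingleton_left [Subsingleton ι] (hp1 : ∑ i, ∑ j, p i j = 1)
    (i : ι) (j : κ) : p i j = (∑ j', p i j') * ∑ i', p i' j := by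
  rw [Fintype.sum_subsingleton (p · j) i, ← Fintype.sum_subsingleton (fun i' => ∑ j', p i' j') i,
    hp1, one_mul]

lemma eq_mul_marginal_of_subsingleton_right [Subsingleton κ] (hp1 : ∑ i, ∑ j, p i j = 1)
    (i : ι) (j : κ) : p i j = (∑ j', p i j') * ∑ i', p i' j := by
  rw [Fintype.sum_subsingleton (p i ·) j, ← Fintype.sum_subsingleton (fun j' => ∑ i', p i' j') j,
    Finset.sum_comm, hp1, mul_one]

end Marginals

section Commutator

variable {α β : Type*} [Fintype α] [DecidableEq α] [Fintype β] [DecidableEq β]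

lemma IsCC.commute_ptrace2_kronecker_one {σ : Matrix (α × β) (α × β) ℂ} (h : IsCC σ) :
    Commute σ (ptrace2 σ ⊗ₖ 1) := by
  obtain ⟨e, f, p, he, hf, -, -, rfl⟩ := h
  let σ := kronMixture p (fun i => proj (e i)) (fun j => proj (f j))
  change Commute σ (ptrace2 σ ⊗ₖ 1)
  rw [Commute, SemiconjBy, ← sub_eq_zero, kronMixture_commutator,
    ptrace2_kronMixture fun j => (isDensity_proj (hf.star_dotProduct_self j)).2]
  have hcomm : ∀ i, proj (e i) * ∑ i', ((∑ j, p i' j : ℝ) : ℂ) • proj (e i')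
      - (∑ i', ((∑ j, p i' j : ℝ) : ℂ) • proj (e i')) * proj (e i) = 0 := fun i =>
    sub_eq_zero.mpr (Commute.sum_right _ _ _ fun i' _ => (he.commute_proj i i').smul_right _).eq
  rw [funext hcomm]
  simp [kronMixture]

lemma ptrace2_kronMixture_ite {p : α → β → ℝ} (hp1 : ∑ i, ∑ j, p i j = 1) (x y : α → ℂ)
    {w z : β → ℂ} (hw : star w ⬝ᵥ w = 1) (hz : star z ⬝ᵥ z = 1) (i₀ : α) (j₀ : β) :
    ptrace2 (kronMixture p (fun i => proj (if i = i₀ then x else y))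
      (fun j => proj (if j = j₀ then w else z)))
      = (∑ j, (p i₀ j : ℂ)) • proj x + (1 - ∑ j, (p i₀ j : ℂ)) • proj y := by
  have hp1' : ∑ i, ((∑ j, p i j : ℝ) : ℂ) = 1 := by exact_mod_cast hp1
  rw [ptrace2_kronMixture fun j => by
    split_ifs
    exacts [(isDensity_proj hw).2, (isDensity_proj hz).2]]
  simp_rw [apply_ite proj]
  rw [sum_smul_ite_eq, hp1', Complex.ofReal_sum]

lemma kronMixture_ite_commutator {p : α → β → ℝ} (hp1 : ∑ i, ∑ j, p i j = 1)
    (x y : α → ℂ) {w z : β → ℂ} (hw : star w ⬝ᵥ w = 1) (hz : star z ⬝ᵥ z = 1) (i₀ : α) (j₀ : β) :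
    let σ := kronMixture p (fun i => proj (if i = i₀ then x else y))
      (fun j => proj (if j = j₀ then w else z))
    σ * (ptrace2 σ ⊗ₖ 1) - (ptrace2 σ ⊗ₖ 1) * σ
      = ((p i₀ j₀ - (∑ j, p i₀ j) * ∑ i, p i j₀ : ℝ) : ℂ) •
          ((proj x * proj y - proj y * proj x) ⊗ₖ (proj w - proj z)) := by
  intro σ
  set a : ℂ := ∑ j, (p i₀ j : ℂ)
  have hcomm : ∀ i, proj (if i = i₀ then x else y) * ptrace2 σ
      - ptrace2 σ * proj (if i = i₀ then x else y)
      = ((if i = i₀ then 1 else 0) - a) • (proj x * proj y - proj y * proj x) := by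
    intro i
    rw [ptrace2_kronMixture_ite hp1 x y hw hz]
    split_ifs <;>
    · simp only [mul_add, add_mul, mul_smul_comm, smul_mul_assoc]
      module
  have hq : ∀ j, ∑ i, (p i j : ℂ) * ((if i = i₀ then 1 else 0) - a)
      = p i₀ j - a * ∑ i, (p i j : ℂ) := by
    intro j
    simp [mul_sub, Finset.sum_sub_distrib, ← Finset.sum_mul, mul_comm]
  have hsum : ∑ j, ((p i₀ j : ℂ) - a * ∑ i, (p i j : ℂ)) = 0 := by
    have hp1' : ∑ j, ∑ i, (p i j : ℂ) = 1 := by rw [Finset.sum_comm]; exact_mod_cast hp1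
    rw [Finset.sum_sub_distrib, ← Finset.mul_sum, hp1', mul_one]
    exact sub_self a
  rw [kronMixture_commutator, funext hcomm, kronMixture_smul_left]
  simp_rw [hq, apply_ite proj]
  rw [sum_smul_ite_eq, hsum, zero_sub, neg_smul, ← sub_eq_add_neg, ← smul_sub, kronecker_smul]
  push_cast
  rfl

end Commutator

section Construction

variable {α β : Type*} [Fintype α] [DecidableEq α] [Fintype β] [DecidableEq β]

lemma not_isCC_kronMixture_ite {p : α → β → ℝ} (hp1 : ∑ i, ∑ j, p i j = 1)
    {x y : α → ℂ} {w z : β → ℂ} (hw : star w ⬝ᵥ w = 1) (hz : star z ⬝ᵥ z = 1)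
    (hxy : proj x * proj y - proj y * proj x ≠ 0) (hwz : proj w * proj z - proj z * proj w ≠ 0)
    {i₀ : α} {j₀ : β} (hne : p i₀ j₀ ≠ (∑ j, p i₀ j) * ∑ i, p i j₀) :
    ¬ IsCC (kronMixture p (fun i => proj (if i = i₀ then x else y))
      (fun j => proj (if j = j₀ then w else z))) := by
  intro hcc
  have hzero := sub_eq_zero.mpr hcc.commute_ptrace2_kronecker_one.eq
  rw [kronMixture_ite_commutator hp1 x y hw hz] at hzero
  have hw_ne_z : proj w - proj z ≠ 0 := fun h => hwz (by rw [sub_eq_zero.mp h, sub_self])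
  exact smul_ne_zero (Complex.ofReal_ne_zero.mpr (sub_ne_zero.mpr hne))
    (kronecker_ne_zero hxy hw_ne_z) hzero

lemma exists_isLocalOp_kronMixture_proj {e u : α → α → ℂ} {f v : β → β → ℂ} (he : Onb e)
    (hf : Onb f) (hu : ∀ i, star (u i) ⬝ᵥ u i = 1) (hv : ∀ j, star (v j) ⬝ᵥ v j = 1) {d : ℕ}
    (hα : Fintype.card α ≤ d) (hβ : Fintype.card β ≤ d) :
    ∃ Φ, IsLocalOp d Φ ∧ ∀ p : α → β → ℝ,
      Φ (kronMixture p (fun i => proj (e i)) (fun j => proj (f j)))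
        = kronMixture p (fun i => proj (u i)) (fun j => proj (v j)) := by
  obtain ⟨KA, hKA, hKAσ⟩ := exists_fin_kraus (fun i => vecMulVec (u i) (star (e i))) hα
  obtain ⟨KB, hKB, hKBσ⟩ := exists_fin_kraus (fun j => vecMulVec (v j) (star (f j))) hβ
  refine ⟨localKraus KA KB, ⟨KA, KB, hKA.trans (sum_conjTranspose_mul_transfer he hu),
    hKB.trans (sum_conjTranspose_mul_transfer hf hv), fun _ => rfl⟩, fun p => ?_⟩
  simp only [localKraus_kronMixture, hKAσ, hKBσ, sum_transfer_mul_proj_mul he,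
    sum_transfer_mul_proj_mul hf]

lemma exists_isLocalOp_not_isCC {e : α → α → ℂ} {f : β → β → ℂ} {p : α → β → ℝ}
    (he : Onb e) (hf : Onb f) (hp0 : ∀ i j, 0 ≤ p i j) (hp1 : ∑ i, ∑ j, p i j = 1)
    {i₀ : α} {j₀ : β} (hne : p i₀ j₀ ≠ (∑ j, p i₀ j) * ∑ i, p i j₀) {d : ℕ}
    (hα : Fintype.card α ≤ d) (hβ : Fintype.card β ≤ d) :
    ∃ Φ, IsLocalOp d Φ ∧
      IsDensity (Φ (kronMixture p (fun i => proj (e i)) (fun j => proj (f j)))) ∧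
      ¬ IsCC (Φ (kronMixture p (fun i => proj (e i)) (fun j => proj (f j)))) := by
  have : Nontrivial α := not_subsingleton_iff_nontrivial.mp fun _ =>
    hne (eq_mul_marginal_of_subsingleton_left hp1 i₀ j₀)
  have : Nontrivial β := not_subsingleton_iff_nontrivial.mp fun _ =>
    hne (eq_mul_marginal_of_subsingleton_right hp1 i₀ j₀)
  obtain ⟨x, y, hx, hy, hxy⟩ := exists_proj_mul_sub_ne_zero (N := α)
  obtain ⟨w, z, hw, hz, hwz⟩ := exists_proj_mul_sub_ne_zero (N := β)
  obtain ⟨Φ, hΦ, hΦp⟩ := exists_isLocalOp_kronMixture_proj he hf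
    (u := fun i => if i = i₀ then x else y) (v := fun j => if j = j₀ then w else z)
    (fun i => by split_ifs <;> assumption) (fun j => by split_ifs <;> assumption) hα hβ
  refine ⟨Φ, hΦ, ?_, ?_⟩ <;> rw [hΦp]
  · exact isDensity_kronMixture hp0 hp1 (fun i => isDensity_proj (by split_ifs <;> assumption))
      (fun j => isDensity_proj (by split_ifs <;> assumption))
  · exact not_isCC_kronMixture_ite hp1 hw hz hxy hwz hne

end Construction

section PotentialQuantumness

variable {α β : Type*} [Fintype α] [DecidableEq α] [Fintype β] [DecidableEq β]

lemma isLocalOp_one_id : IsLocalOp 1 (id : Matrix (α × β) (α × β) ℂ → _) :=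
  ⟨fun _ => 1, fun _ => 1, by simp, by simp, fun σ => by simp [localKraus]⟩

lemma IsLocalOp.le_PQ {d : ℕ} {Φ : Matrix (α × β) (α × β) ℂ → Matrix (α × β) (α × β) ℂ}
    (hΦ : IsLocalOp d Φ) (Q : Matrix (α × β) (α × β) ℂ → ℝ) (ρ : Matrix (α × β) (α × β) ℂ) :
    (Q (Φ ρ) : EReal) ≤ PQ d Q ρ :=
  le_sSup ⟨Φ, hΦ, rfl⟩

end PotentialQuantumness

theorem statement5_general {m n : ℕ} (Q : Matrix (Fin m × Fin n) (Fin m × Fin n) ℂ → ℝ)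
    (hqc : ∀ σ, IsDensity σ → ¬ IsCC σ → 0 < Q σ)
    (ρ : Matrix (Fin m × Fin n) (Fin m × Fin n) ℂ)
    (hρ : IsDensity ρ) (hnp : ¬ IsProduct ρ) :
    ∃ d : ℕ, 1 ≤ d ∧ (0 : EReal) < PQ d Q ρ := by
  by_cases hcc : IsCC ρ
  · obtain ⟨e, f, p, he, hf, hp0, hp1, rfl⟩ := hcc
    obtain ⟨i₀, j₀, hne⟩ : ∃ i₀ j₀, p i₀ j₀ ≠ (∑ j, p i₀ j) * ∑ i, p i j₀ := by
      by_contra! hp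
      exact hnp <| isProduct_kronMixture hp0 hp1
        (fun i => isDensity_proj (he.star_dotProduct_self i))
        (fun j => isDensity_proj (hf.star_dotProduct_self j)) hp
    obtain ⟨Φ, hΦ, hden, hnc⟩ :=
      exists_isLocalOp_not_isCC he hf hp0 hp1 hne (d := max m n) (by simp) (by simp)
    exact ⟨max m n, le_max_of_le_left i₀.pos,
      (EReal.coe_pos.mpr (hqc _ hden hnc)).trans_le (hΦ.le_PQ Q _)⟩
  · exact ⟨1, le_rfl, (EReal.coe_pos.mpr (hqc ρ hρ hcc)).trans_le (isLocalOp_one_id.le_PQ Q ρ)⟩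

/-- Let `Q` be nonnegative on density matrices and strictly positive on
density matrices that are not classically correlated.  If `ρ` is a density matrix that
is not a product state, then `PQ_d(ρ) > 0` for some `d ≥ 1`. -/
theorem statement5 {m n : ℕ} (Q : Matrix (Fin m × Fin n) (Fin m × Fin n) ℂ → ℝ)
    (hpos : ∀ σ, IsDensity σ → 0 ≤ Q σ)
    (hqc : ∀ σ, IsDensity σ → ¬ IsCC σ → 0 < Q σ)
    (ρ : Matrix (Fin m × Fin n) (Fin m × Fin n) ℂ)
    (hρ : IsDensity ρ) (hnp : ¬ IsProduct ρ) :
    ∃ d : ℕ, 1 ≤ d ∧ (0 : EReal) < PQ d Q ρ :=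
  statement5_general Q hqc ρ hρ hnp
end

section
/- Let ρ be a density matrix on (ℂ^{m1} ⊗ ℂ^{m2}) ⊗ (ℂ^{n1} ⊗ ℂ^{n2}), viewed as bipartite with A = ℂ^{m1} ⊗ ℂ^{m2} and B = ℂ^{n1} ⊗ ℂ^{n2}. Let Q be a function from density matrices on A ⊗ B to ℝ and q a function from density matrices on ℂ^{m1} ⊗ ℂ^{n1} to ℝ such that Q(ι(σ)) = q(σ) for every density matrix σ on ℂ^{m1} ⊗ ℂ^{n1}, where ι(σ) denotes the state on (ℂ^{m1} ⊗ ℂ^{m2}) ⊗ (ℂ^{n1} ⊗ ℂ^{n2}) obtained by placing σ on the ℂ^{m1} and ℂ^{n1} factors and the pure states |0⟩⟨0| on the ℂ^{m2} and ℂ^{n2} factors. If m2 ≤ d and n2 ≤ d, then PQ_d(ρ) ≥ q(Tr_{A2,B2}(ρ)), where Tr_{A2,B2}(ρ) is the partial trace of ρ over the ℂ^{m2} and ℂ^{n2} factors. -/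
open Matrix
open scoped Kronecker ComplexOrder

/-- Partial trace over the second local factor on each side: from
`(α₁ ⊗ α₂) ⊗ (β₁ ⊗ β₂)` down to `α₁ ⊗ β₁`. -/
noncomputable def ptraceInner {α1 α2 β1 β2 : Type*} [Fintype α2] [Fintype β2]
    (X : Matrix ((α1 × α2) × (β1 × β2)) ((α1 × α2) × (β1 × β2)) ℂ) :
    Matrix (α1 × β1) (α1 × β1) ℂ :=
  Matrix.of fun p q => ∑ a2 : α2, ∑ b2 : β2,
    X ((p.1, a2), (p.2, b2)) ((q.1, a2), (q.2, b2))

/-- The embedding `ι(σ)` placing `σ` on the `ℂ^{m1}`, `ℂ^{n1}` factors and the pure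
states `|0⟩⟨0|` on the `ℂ^{m2}`, `ℂ^{n2}` factors. -/
noncomputable def iotaEmb {m1 m2 n1 n2 : ℕ}
    (σ : Matrix (Fin m1 × Fin n1) (Fin m1 × Fin n1) ℂ) :
    Matrix ((Fin m1 × Fin m2) × (Fin n1 × Fin n2))
      ((Fin m1 × Fin m2) × (Fin n1 × Fin n2)) ℂ :=
  Matrix.of fun p q =>
    σ (p.1.1, p.2.1) (q.1.1, q.2.1) *
      (if p.1.2.val = 0 ∧ q.1.2.val = 0 then (1 : ℂ) else 0) *
      (if p.2.2.val = 0 ∧ q.2.2.val = 0 then (1 : ℂ) else 0)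

/-!
Discard the `ℂ^{m2}` and `ℂ^{n2}` factors and reset them to `|0⟩`. On each side this is the
local channel with Kraus operators `1 ⊗ |0⟩⟨k|`, `k < m2`, padded by zeros up to rank `d`.
The product Kraus operators factor as `V ⟨k, l|`, where `⟨k, l|` selects an inner block (these are
Kraus operators of the partial trace) and `V` is the isometry with `ι(σ) = V σ Vᴴ`. Hence the
channel maps `ρ` to `ι(Tr_{A2,B2} ρ)`, whose `Q`-value is `q(Tr_{A2,B2} ρ)`.
-/

lemma IsDensity.nonempty {N : Type*} [Fintype N] {ρ : Matrix N N ℂ} (hρ : IsDensity ρ) :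
    Nonempty N := by
  by_contra h
  rw [not_nonempty_iff] at h
  simpa [Matrix.trace] using hρ.2

lemma Fin.sum_ite_val_eq {M : Type*} [AddCommMonoid M] {d a : ℕ} (ha : a < d) (f : ℕ → M) :
    ∑ k : Fin d, (if a = k.val then f k else 0) = f a := by
  rw [Fintype.sum_eq_single ⟨a, ha⟩] <;> simp +contextual [Fin.ext_iff, eq_comm]

lemma Fin.sum_univ_eq_sum_of_le {M : Type*} [AddCommMonoid M] {m d : ℕ} (h : m ≤ d) {g : ℕ → M}
    (hg : ∀ k, m ≤ k → g k = 0) : ∑ k : Fin d, g k = ∑ a : Fin m, g a := by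
  rw [Fin.sum_univ_eq_sum_range, Fin.sum_univ_eq_sum_range]
  exact (Finset.sum_subset (Finset.range_subset_range.2 h) fun k _ hk =>
    hg k (by simpa using hk)).symm

/-- The operator `|0⟩⟨k|` on `ℂ^m`; it vanishes when `m ≤ k`. -/
def resetKraus (m k : ℕ) : Matrix (Fin m) (Fin m) ℂ :=
  of fun a b => if a.val = 0 ∧ b.val = k then 1 else 0

lemma conjTranspose_resetKraus_mul_self {m : ℕ} (hm : 0 < m) (k : ℕ) :
    (resetKraus m k)ᴴ * resetKraus m k = of fun a b => if a.val = k ∧ b.val = k then 1 else 0 := by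
  ext a b
  rw [mul_apply, Fintype.sum_eq_single ⟨0, hm⟩ fun j hj => by
    simp [resetKraus, Fin.ext_iff.not.mp hj]]
  simp [resetKraus, ← ite_and, and_comm]

lemma sum_conjTranspose_resetKraus_mul_self {m d : ℕ} (hm : 0 < m) (hmd : m ≤ d) :
    ∑ k : Fin d, (resetKraus m k)ᴴ * resetKraus m k = 1 := by
  ext a b
  simp only [conjTranspose_resetKraus_mul_self hm, Matrix.sum_apply, of_apply, ite_and, one_apply]
  rw [Fin.sum_ite_val_eq (Nat.lt_of_lt_of_le a.isLt hmd) fun k => if b.val = k then 1 else 0]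
  simp [Fin.ext_iff, eq_comm]

lemma sum_one_kronecker_resetKraus {α : Type*} [Fintype α] [DecidableEq α] {m d : ℕ}
    (hm : 0 < m) (hmd : m ≤ d) :
    ∑ k : Fin d, ((1 : Matrix α α ℂ) ⊗ₖ resetKraus m k)ᴴ * (1 ⊗ₖ resetKraus m k) = 1 := by
  simp only [conjTranspose_kronecker, conjTranspose_one, ← mul_kronecker_mul, one_mul]
  rw [← one_kronecker_one, ← sum_conjTranspose_resetKraus_mul_self (d := d) hm hmd]
  ext ⟨a, b⟩ ⟨a', b'⟩
  simp [Matrix.sum_apply, kroneckerMap_apply, Finset.mul_sum]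

section PartialTrace

variable {α1 α2 β1 β2 : Type*} [Fintype α2] [Fintype β2]

lemma ptraceInner_eq_sum_submatrix
    (ρ : Matrix ((α1 × α2) × (β1 × β2)) ((α1 × α2) × (β1 × β2)) ℂ) :
    ptraceInner ρ = ∑ a2 : α2, ∑ b2 : β2,
      ρ.submatrix (fun r : α1 × β1 => ((r.1, a2), (r.2, b2))) (fun r => ((r.1, a2), (r.2, b2))) := by
  ext r s
  simp [ptraceInner, Matrix.sum_apply]

variable [Fintype α1] [Fintype β1]

lemma trace_ptraceInner (ρ : Matrix ((α1 × α2) × (β1 × β2)) ((α1 × α2) × (β1 × β2)) ℂ) :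
    (ptraceInner ρ).trace = ρ.trace := by
  simp only [trace, diag, ptraceInner, of_apply, Fintype.sum_prod_type]
  exact Finset.sum_congr rfl fun _ _ => Finset.sum_comm

lemma IsDensity.ptraceInner {ρ : Matrix ((α1 × α2) × (β1 × β2)) ((α1 × α2) × (β1 × β2)) ℂ}
    (hρ : IsDensity ρ) : IsDensity (ptraceInner ρ) := by
  refine ⟨?_, (trace_ptraceInner ρ).trans hρ.2⟩
  rw [ptraceInner_eq_sum_submatrix]
  exact posSemidef_sum _ fun a2 _ => posSemidef_sum _ fun b2 _ => hρ.1.submatrix _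

end PartialTrace

def tensorKetZero (α1 β1 : Type*) [DecidableEq α1] [DecidableEq β1] (m2 n2 : ℕ) :
    Matrix ((α1 × Fin m2) × (β1 × Fin n2)) (α1 × β1) ℂ :=
  of fun p r => if p.1.1 = r.1 ∧ p.2.1 = r.2 ∧ p.1.2.val = 0 ∧ p.2.2.val = 0 then 1 else 0

/-- `1 ⊗ ⟨k| ⊗ 1 ⊗ ⟨l|`, zero unless `k < m2` and `l < n2`. -/
def blockSelect (α1 β1 : Type*) [DecidableEq α1] [DecidableEq β1] (m2 n2 k l : ℕ) :
    Matrix (α1 × β1) ((α1 × Fin m2) × (β1 × Fin n2)) ℂ :=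
  of fun r x => if x.1.1 = r.1 ∧ x.2.1 = r.2 ∧ x.1.2.val = k ∧ x.2.2.val = l then 1 else 0

section Blocks

variable {α1 β1 : Type*} [DecidableEq α1] [DecidableEq β1] {m2 n2 : ℕ}

lemma iotaEmb_eq_mul {m1 n1 : ℕ} (σ : Matrix (Fin m1 × Fin n1) (Fin m1 × Fin n1) ℂ) :
    iotaEmb (m2 := m2) (n2 := n2) σ =
      tensorKetZero (Fin m1) (Fin n1) m2 n2 * σ * (tensorKetZero (Fin m1) (Fin n1) m2 n2)ᴴ := by
  ext ⟨⟨a1, a2⟩, ⟨b1, b2⟩⟩ ⟨⟨c1, c2⟩, ⟨e1, e2⟩⟩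
  simp only [iotaEmb, tensorKetZero, of_apply, mul_apply, conjTranspose_apply,
    Fintype.sum_prod_type, ite_and, mul_ite, mul_one, mul_zero, ite_mul, one_mul, zero_mul,
    Finset.sum_ite_irrel, Finset.sum_ite_eq, Finset.mem_univ, if_true, Finset.sum_const_zero,
    RCLike.star_def, apply_ite (starRingEnd ℂ), map_one, map_zero]
  split_ifs <;> simp_all

lemma kronecker_resetKraus_eq_mul [Fintype α1] [Fintype β1] (k l : ℕ) :
    ((1 : Matrix α1 α1 ℂ) ⊗ₖ resetKraus m2 k) ⊗ₖ ((1 : Matrix β1 β1 ℂ) ⊗ₖ resetKraus n2 l) =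
      tensorKetZero α1 β1 m2 n2 * blockSelect α1 β1 m2 n2 k l := by
  ext ⟨⟨a1, a2⟩, ⟨b1, b2⟩⟩ ⟨⟨c1, c2⟩, ⟨e1, e2⟩⟩
  simp only [tensorKetZero, blockSelect, resetKraus, of_apply, mul_apply, kroneckerMap_apply,
    one_apply, Fintype.sum_prod_type, ite_and, mul_ite, mul_one, mul_zero, Finset.sum_ite_irrel,
    Finset.sum_ite_eq, Finset.mem_univ, if_true, Finset.sum_const_zero]
  split_ifs <;> simp_all

lemma blockSelect_eq_zero_of_le_left {k : ℕ} (l : ℕ) (hk : m2 ≤ k) :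
    blockSelect α1 β1 m2 n2 k l = 0 := by
  ext r x
  simp [blockSelect, (Nat.lt_of_lt_of_le x.1.2.isLt hk).ne]

lemma blockSelect_eq_zero_of_le_right (k : ℕ) {l : ℕ} (hl : n2 ≤ l) :
    blockSelect α1 β1 m2 n2 k l = 0 := by
  ext r x
  simp [blockSelect, (Nat.lt_of_lt_of_le x.2.2.isLt hl).ne]

lemma ptraceInner_eq_sum_blockSelect [Fintype α1] [Fintype β1] {d : ℕ} (hm2 : m2 ≤ d)
    (hn2 : n2 ≤ d)
    (ρ : Matrix ((α1 × Fin m2) × (β1 × Fin n2)) ((α1 × Fin m2) × (β1 × Fin n2)) ℂ) :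
    ptraceInner ρ = ∑ k : Fin d, ∑ l : Fin d,
      blockSelect α1 β1 m2 n2 k l * ρ * (blockSelect α1 β1 m2 n2 k l)ᴴ := by
  set T : ℕ → ℕ → Matrix (α1 × β1) (α1 × β1) ℂ := fun k l =>
    blockSelect α1 β1 m2 n2 k l * ρ * (blockSelect α1 β1 m2 n2 k l)ᴴ with hT
  change _ = ∑ k : Fin d, ∑ l : Fin d, T k l
  rw [Fin.sum_univ_eq_sum_of_le (g := fun k => ∑ l : Fin d, T k l) hm2 fun k hk => by
      simp [hT, blockSelect_eq_zero_of_le_left _ hk],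
    Finset.sum_congr rfl fun (a : Fin m2) _ => Fin.sum_univ_eq_sum_of_le (g := T a) hn2
      fun l hl => by simp [hT, blockSelect_eq_zero_of_le_right _ hl]]
  ext ⟨a1, b1⟩ ⟨c1, e1⟩
  simp [hT, ptraceInner, blockSelect, Matrix.sum_apply, mul_apply, Fintype.sum_prod_type, ite_and,
    Fin.val_inj, apply_ite (starRingEnd ℂ), Finset.sum_ite_irrel, mul_ite]

end Blocks

lemma localKraus_resetKraus_eq_iotaEmb {m1 m2 n1 n2 d : ℕ} (hm2 : m2 ≤ d) (hn2 : n2 ≤ d)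
    (ρ : Matrix ((Fin m1 × Fin m2) × (Fin n1 × Fin n2))
      ((Fin m1 × Fin m2) × (Fin n1 × Fin n2)) ℂ) :
    localKraus (fun k : Fin d => (1 : Matrix (Fin m1) (Fin m1) ℂ) ⊗ₖ resetKraus m2 k)
      (fun l : Fin d => (1 : Matrix (Fin n1) (Fin n1) ℂ) ⊗ₖ resetKraus n2 l) ρ =
      iotaEmb (ptraceInner ρ) := by
  simp only [localKraus, kronecker_resetKraus_eq_mul, conjTranspose_mul, iotaEmb_eq_mul,
    ptraceInner_eq_sum_blockSelect hm2 hn2, Matrix.mul_sum, Matrix.sum_mul, Matrix.mul_assoc]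

/-- Let `ρ` be a density matrix on
`(ℂ^{m1} ⊗ ℂ^{m2}) ⊗ (ℂ^{n1} ⊗ ℂ^{n2})`, `Q` a measure on `A ⊗ B` and `q` a measure on
`ℂ^{m1} ⊗ ℂ^{n1}` with `Q(ι(σ)) = q(σ)` for all density matrices `σ`.  If `m2 ≤ d` and
`n2 ≤ d`, then `PQ_d(ρ) ≥ q(Tr_{A2,B2}(ρ))`. -/
theorem statement11 {m1 m2 n1 n2 : ℕ}
    (Q : Matrix ((Fin m1 × Fin m2) × (Fin n1 × Fin n2))
      ((Fin m1 × Fin m2) × (Fin n1 × Fin n2)) ℂ → ℝ)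
    (q : Matrix (Fin m1 × Fin n1) (Fin m1 × Fin n1) ℂ → ℝ)
    (hQq : ∀ σ, IsDensity σ → Q (iotaEmb σ) = q σ)
    (d : ℕ) (hm2 : m2 ≤ d) (hn2 : n2 ≤ d)
    (ρ : Matrix ((Fin m1 × Fin m2) × (Fin n1 × Fin n2))
      ((Fin m1 × Fin m2) × (Fin n1 × Fin n2)) ℂ)
    (hρ : IsDensity ρ) :
    (q (ptraceInner ρ) : EReal) ≤ PQ d Q ρ := by
  obtain ⟨⟨⟨_, a2⟩, ⟨_, b2⟩⟩⟩ := hρ.nonempty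
  have hm : 0 < m2 := a2.pos
  have hn : 0 < n2 := b2.pos
  refine le_sSup ⟨_, ⟨_, _, sum_one_kronecker_resetKraus hm hm2,
    sum_one_kronecker_resetKraus hn hn2, fun _ => rfl⟩, ?_⟩
  rw [localKraus_resetKraus_eq_iotaEmb hm2 hn2, hQq _ hρ.ptraceInner]
end
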